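/- Let π̂ maximize the penalized return η̃(π) := η_{M̂}(π) − γ·ε(π) over policies, where ε(π) ≥ 0 and suppose for every policy π: |η_{M̂}(π) − η_M(π)| ≤ γ·ε(π). Then for every policy π, η_M(π̂) ≥ η_M(π) − 2γ·ε(π). In particular η_M(π̂) ≥ sup_π {η_M(π) − 2γ·ε(π)}. -/
import Mathlib

/-- Abstract form of MOPO's performance lower bound (Theorem 4.2): if `π̂` maximizes the
penalized return `η_{M̂}(π) − γ ε(π)` and the model-return gap is bounded as
`|η_{M̂}(π) − η_M(π)| ≤ γ ε(π)` for all `π`, then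
`η_M(π̂) ≥ η_M(π) − 2γ ε(π)` for every `π`, hence `η_M(π̂) ≥ sup_π {η_M(π) − 2γ ε(π)}`. -/
theorem mopo_lower_bound {P : Type*} (ηM ηMhat : P → ℝ) (ε : P → ℝ) (γ : ℝ)
    (hγ : 0 ≤ γ) (hε : ∀ π, 0 ≤ ε π)
    (herr : ∀ π, |ηMhat π - ηM π| ≤ γ * ε π)
    (πhat : P) (hopt : ∀ π, ηMhat π - γ * ε π ≤ ηMhat πhat - γ * ε πhat) :
    (∀ π : P, ηM πhat ≥ ηM π - 2 * γ * ε π) ∧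
      ηM πhat ≥ ⨆ π : P, (ηM π - 2 * γ * ε π) := by
  have key : ∀ π : P, ηM πhat ≥ ηM π - 2 * γ * ε π := by
    intro π
    have h1 := abs_le.mp (herr π)
    have h2 := abs_le.mp (herr πhat)
    have h3 := hopt π
    have h4 : 0 ≤ γ * ε πhat := mul_nonneg hγ (hε πhat)
    nlinarith [h1.1, h1.2, h2.1, h2.2]
  have : Nonempty P := ⟨πhat⟩
  exact ⟨key, ciSup_le key⟩
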